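/- arXiv:math/0006173 — 2 statements merged into one kernel-verified Lean document; each statement's English description precedes it below -/
import Mathlib

section
/- The number of favourite sites either stays the same, increases by exactly one, or drops to one at each step: for every n, either #𝕍(n+1) = #𝕍(n), or #𝕍(n+1) = #𝕍(n) + 1, or #𝕍(n+1) = 1. -/
/-- Local time: `ξ(n,x) = #{0 ≤ k ≤ n : S(k) = x}`. -/
def localTime (S : ℕ → ℤ) (n : ℕ) (x : ℤ) : ℕ :=
  ((Finset.range (n + 1)).filter (fun k => S k = x)).card

/-- Maximum local time: `ξ*(n) = max_{y ∈ ℤ} ξ(n,y)`. -/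
noncomputable def maxLocalTime (S : ℕ → ℤ) (n : ℕ) : ℕ :=
  ⨆ y : ℤ, localTime S n y

/-- Set of favourite sites: `𝕍(n) = {x ∈ ℤ : ξ(n,x) = max_y ξ(n,y)}`. -/
def favSites (S : ℕ → ℤ) (n : ℕ) : Set ℤ :=
  {x : ℤ | localTime S n x = maxLocalTime S n}

/-! Between times `n` and `n + 1` the local time profile changes only at the site `S (n + 1)`,
where it goes up by one. So the statement is about incrementing one value of a bounded function
`f : α → ℕ`: if the incremented point was a maximizer it becomes the unique one, if it was one
below the maximum it joins the maximizers, and otherwise nothing changes. -/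

open Function Set

section Maximizers

variable {α : Type*}

def maximizers (f : α → ℕ) : Set α := {x | f x = iSup f}

lemma mem_maximizers {f : α → ℕ} {x : α} : x ∈ maximizers f ↔ f x = iSup f := Iff.rfl

variable [DecidableEq α] {f : α → ℕ}

lemma bddAbove_range_update_succ (hf : BddAbove (range f)) (a : α) :
    BddAbove (range (update f a (f a + 1))) := by
  obtain ⟨M, hM⟩ := hf
  refine ⟨M + 1, forall_mem_range.2 fun y => ?_⟩
  have hy := hM (mem_range_self y)
  have ha := hM (mem_range_self a)
  by_cases h : y = a
  · subst h; simpa using ha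
  · rw [update_of_ne h]; omega

lemma iSup_update_succ_of_mem (hf : BddAbove (range f)) {a : α} (ha : a ∈ maximizers f) :
    iSup (update f a (f a + 1)) = iSup f + 1 := by
  have : Nonempty α := ⟨a⟩
  refine le_antisymm (ciSup_le fun y => ?_) ?_
  · by_cases h : y = a
    · subst h; simp [ha.symm]
    · rw [update_of_ne h]; exact (le_ciSup hf y).trans (Nat.le_succ _)
  · calc iSup f + 1 = update f a (f a + 1) a := by simp [ha.symm]
      _ ≤ _ := le_ciSup (bddAbove_range_update_succ hf a) a

lemma iSup_update_succ_of_lt (hf : BddAbove (range f)) {a : α} (ha : f a < iSup f) :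
    iSup (update f a (f a + 1)) = iSup f := by
  have : Nonempty α := ⟨a⟩
  refine le_antisymm (ciSup_le fun y => ?_) ?_
  · by_cases h : y = a
    · subst h; simpa using ha
    · rw [update_of_ne h]; exact le_ciSup hf y
  · obtain ⟨b, hb⟩ := Nat.sSup_mem (range_nonempty f) hf
    have hba : b ≠ a := by rintro rfl; exact ha.ne hb
    calc iSup f = update f a (f a + 1) b := by rw [update_of_ne hba]; exact hb.symm
      _ ≤ _ := le_ciSup (bddAbove_range_update_succ hf a) b

lemma maximizers_update_succ_of_mem (hf : BddAbove (range f)) {a : α} (ha : a ∈ maximizers f) :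
    maximizers (update f a (f a + 1)) = {a} := by
  ext x
  rw [mem_maximizers, iSup_update_succ_of_mem hf ha, mem_singleton_iff]
  by_cases h : x = a
  · subst h; simp [ha.symm]
  · have := le_ciSup hf x
    rw [update_of_ne h]
    exact iff_of_false (by omega) h

lemma maximizers_update_succ_of_add_one_eq (hf : BddAbove (range f)) {a : α}
    (ha : f a + 1 = iSup f) :
    maximizers (update f a (f a + 1)) = insert a (maximizers f) := by
  ext x
  rw [mem_maximizers, iSup_update_succ_of_lt hf (by omega), mem_insert_iff, mem_maximizers]
  by_cases h : x = a
  · subst h; simp [ha]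
  · simp [h]

lemma maximizers_update_succ_of_add_one_lt (hf : BddAbove (range f)) {a : α}
    (ha : f a + 1 < iSup f) :
    maximizers (update f a (f a + 1)) = maximizers f := by
  ext x
  rw [mem_maximizers, iSup_update_succ_of_lt hf (by omega), mem_maximizers]
  by_cases h : x = a
  · subst h; rw [update_self]; omega
  · rw [update_of_ne h]

theorem ncard_maximizers_update_succ (hf : BddAbove (range f)) (a : α) :
    (maximizers (update f a (f a + 1))).ncard = (maximizers f).ncard ∨
    (maximizers (update f a (f a + 1))).ncard = (maximizers f).ncard + 1 ∨
    (maximizers (update f a (f a + 1))).ncard = 1 := by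
  have hle : f a ≤ iSup f := le_ciSup hf a
  rcases hle.eq_or_lt with hmax | hlt
  · rw [maximizers_update_succ_of_mem hf hmax, ncard_singleton]
    exact Or.inr (Or.inr rfl)
  rcases (Nat.succ_le_of_lt hlt).eq_or_lt with hnext | hbelow
  · rw [maximizers_update_succ_of_add_one_eq hf hnext]
    have := ncard_insert_le a (maximizers f)
    have := ncard_le_ncard_insert a (maximizers f)
    omega
  · exact Or.inl (congrArg ncard (maximizers_update_succ_of_add_one_lt hf hbelow))

end Maximizers

lemma localTime_succ (S : ℕ → ℤ) (n : ℕ) :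
    localTime S (n + 1) = update (localTime S n) (S (n + 1)) (localTime S n (S (n + 1)) + 1) := by
  funext x
  unfold localTime
  rw [Finset.range_add_one, Finset.filter_insert]
  by_cases h : x = S (n + 1)
  · subst h
    rw [if_pos rfl, update_self, Finset.card_insert_of_notMem (by simp)]
  · rw [if_neg (Ne.symm h), update_of_ne h]

lemma bddAbove_range_localTime (S : ℕ → ℤ) (n : ℕ) : BddAbove (range (localTime S n)) :=
  ⟨n + 1, forall_mem_range.2 fun _ => (Finset.card_filter_le _ _).trans (Finset.card_range _).le⟩

theorem card_favSites_step_general (S : ℕ → ℤ) (n : ℕ) :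
    (favSites S (n + 1)).ncard = (favSites S n).ncard ∨
    (favSites S (n + 1)).ncard = (favSites S n).ncard + 1 ∨
    (favSites S (n + 1)).ncard = 1 := by
  have h := ncard_maximizers_update_succ (bddAbove_range_localTime S n) (S (n + 1))
  rwa [← localTime_succ] at h

theorem card_favSites_step (S : ℕ → ℤ) (hS0 : S 0 = 0)
    (hstep : ∀ n, |S (n + 1) - S n| = 1) (n : ℕ) :
    (favSites S (n + 1)).ncard = (favSites S n).ncard ∨
    (favSites S (n + 1)).ncard = (favSites S n).ncard + 1 ∨
    (favSites S (n + 1)).ncard = 1 :=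
  card_favSites_step_general S n
end

section
/- For a simple symmetric random walk on ℤ, almost surely there are infinitely many times n at which the favourite site is unique, i.e. ℙ{#𝕍(n) = 1 infinitely often} = 1. -/
open MeasureTheory ProbabilityTheory

/-!
Whenever the maximal local time increases at time `n + 1`, the site `S (n + 1)` just visited is
the only favourite site. If some site is visited infinitely often, the maximal local time is
unbounded, so it increases infinitely often. A nearest-neighbour path visiting every site only
finitely often tends to `+∞` or to `-∞`. Finally, a walk with independent symmetric steps drifts
to `+∞` with probability `0`: by Kolmogorov's zero-one law this probability is `0` or `1`, and by
symmetry it equals the probability of the disjoint event of drifting to `-∞`.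
-/

open Filter Finset

section LocalTime

variable (f : ℕ → ℤ)

lemma localTime_eq_count (n : ℕ) (x : ℤ) : localTime f n x = Nat.count (f · = x) (n + 1) :=
  (Nat.count_eq_card_filter_range _ _).symm

lemma localTime_succ_s10 (n : ℕ) (x : ℤ) :
    localTime f (n + 1) x = localTime f n x + if f (n + 1) = x then 1 else 0 := by
  simp only [localTime_eq_count, Nat.count_succ]

lemma localTime_le (n : ℕ) (x : ℤ) : localTime f n x ≤ n + 1 :=
  (card_filter_le _ _).trans (card_range _).le

lemma bddAbove_range_localTime_s10 (n : ℕ) : BddAbove (Set.range (localTime f n)) :=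
  ⟨n + 1, by rintro _ ⟨x, rfl⟩; exact localTime_le f n x⟩

lemma le_maxLocalTime (n : ℕ) (x : ℤ) : localTime f n x ≤ maxLocalTime f n :=
  le_ciSup (bddAbove_range_localTime_s10 f n) x

lemma exists_localTime_eq_maxLocalTime (n : ℕ) : ∃ x, localTime f n x = maxLocalTime f n :=
  Nat.sSup_mem (Set.range_nonempty _) (bddAbove_range_localTime_s10 f n)

lemma maxLocalTime_succ_le (n : ℕ) : maxLocalTime f (n + 1) ≤ maxLocalTime f n + 1 :=
  ciSup_le fun x => by
    rw [localTime_succ_s10]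
    have := le_maxLocalTime f n x
    split_ifs <;> omega

lemma favSites_succ_eq_singleton {n : ℕ} (h : maxLocalTime f n < maxLocalTime f (n + 1)) :
    favSites f (n + 1) = {f (n + 1)} := by
  have hsub : favSites f (n + 1) ⊆ {f (n + 1)} := by
    intro x hx
    by_contra hne
    have hx' : localTime f (n + 1) x = maxLocalTime f (n + 1) := hx
    rw [localTime_succ_s10, if_neg (Ne.symm hne)] at hx'
    have := le_maxLocalTime f n x
    omega
  exact (Set.Nonempty.subset_singleton_iff (exists_localTime_eq_maxLocalTime f (n + 1))).1 hsub

lemma tendsto_localTime_atTop {x : ℤ} (hx : {n | f n = x}.Infinite) :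
    Tendsto (fun n => localTime f n x) atTop atTop := by
  simp_rw [localTime_eq_count]
  refine tendsto_atTop_atTop.2 fun m => ⟨Nat.nth (f · = x) m, fun n hn => ?_⟩
  rw [← Nat.count_nth_of_infinite hx m]
  exact Nat.count_monotone _ (by omega)

lemma tendsto_maxLocalTime_atTop {x : ℤ} (hx : {n | f n = x}.Infinite) :
    Tendsto (maxLocalTime f) atTop atTop :=
  tendsto_atTop_mono (le_maxLocalTime f · x) (tendsto_localTime_atTop f hx)

end LocalTime

lemma infinite_setOf_lt_succ {α : Type*} [LinearOrder α] [NoMaxOrder α] {u : ℕ → α}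
    (hu : Tendsto u atTop atTop) : {n | u n < u (n + 1)}.Infinite := by
  intro hfin
  obtain ⟨N, hN⟩ := hfin.bddAbove
  have hle : ∀ n, N + 1 ≤ n → u n ≤ u (N + 1) := by
    intro n hn
    induction n, hn using Nat.le_induction with
    | base => exact le_rfl
    | succ n hn ih => exact (not_lt.1 fun h => by have := hN h; omega).trans ih
  obtain ⟨n, hgt, hge⟩ := ((hu.eventually_gt_atTop (u (N + 1))).and (eventually_ge_atTop _)).exists
  exact (hle n hge).not_gt hgt

theorem infinite_setOf_ncard_favSites_eq_one {f : ℕ → ℤ} (hrec : ∃ x, {n | f n = x}.Infinite) :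
    {n | (favSites f n).ncard = 1}.Infinite := by
  obtain ⟨x, hx⟩ := hrec
  refine ((infinite_setOf_lt_succ (tendsto_maxLocalTime_atTop f hx)).image
    (add_left_injective 1).injOn).mono ?_
  rintro _ ⟨n, hn, rfl⟩
  simp [favSites_succ_eq_singleton f hn]

section NearestNeighbourPath

variable {f : ℕ → ℤ}

lemma eventually_pos_or_eventually_neg (hstep : ∀ n, |f (n + 1) - f n| ≤ 1)
    (hne : ∀ᶠ n in atTop, f n ≠ 0) : (∀ᶠ n in atTop, 0 < f n) ∨ ∀ᶠ n in atTop, f n < 0 := by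
  obtain ⟨N, hN⟩ := eventually_atTop.1 hne
  have hsign : ∀ n, N ≤ n → (0 < f n ↔ 0 < f N) := by
    intro n hn
    induction n, hn using Nat.le_induction with
    | base => rfl
    | succ n hn ih =>
      have := abs_le.1 (hstep n)
      have := hN n hn
      have := hN (n + 1) (by omega)
      rw [← ih]
      omega
  rcases (hN N le_rfl).lt_or_gt with hneg | hpos
  · refine .inr (eventually_atTop.2 ⟨N, fun n hn => ?_⟩)
    have := hsign n hn
    have := hN n hn
    omega
  · exact .inl (eventually_atTop.2 ⟨N, fun n hn => (hsign n hn).2 hpos⟩)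

lemma tendsto_atTop_of_tendsto_cofinite {α : Type*} {l : Filter α} {g : α → ℤ}
    (hcof : Tendsto g l cofinite) (hpos : ∀ᶠ a in l, 0 < g a) : Tendsto g l atTop :=
  tendsto_atTop.2 fun b => by
    filter_upwards [hcof.eventually (Set.finite_Ioo 0 b).eventually_cofinite_notMem, hpos]
      with a hb h0
    simp only [Set.mem_Ioo, not_and, not_lt] at hb
    exact hb h0

theorem tendsto_atTop_or_atBot_of_finite_fibres (hstep : ∀ n, |f (n + 1) - f n| ≤ 1)
    (hfin : ∀ x, {n | f n = x}.Finite) : Tendsto f atTop atTop ∨ Tendsto f atTop atBot := by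
  have hcof : Tendsto f atTop cofinite :=
    Nat.cofinite_eq_atTop ▸ Tendsto.cofinite_of_finite_preimage_singleton hfin
  rcases eventually_pos_or_eventually_neg hstep (hcof.eventually (eventually_cofinite_ne 0))
    with hpos | hneg
  · exact .inl (tendsto_atTop_of_tendsto_cofinite hcof hpos)
  · refine .inr (tendsto_neg_atTop_iff.1 (tendsto_atTop_of_tendsto_cofinite
      (neg_injective.tendsto_cofinite.comp hcof) ?_))
    filter_upwards [hneg] with n hn
    exact neg_pos.2 hn

end NearestNeighbourPath

lemma tendsto_sum_range_atTop_iff_sum_Ico {G : Type*} [AddCommGroup G] [PartialOrder G]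
    [IsOrderedAddMonoid G] (f : ℕ → G) (m : ℕ) :
    Tendsto (fun n => ∑ i ∈ range n, f i) atTop atTop ↔
      Tendsto (fun n => ∑ i ∈ Ico m n, f i) atTop atTop := by
  have hsplit : (fun n => ∑ i ∈ range m, f i + ∑ i ∈ Ico m n, f i) =ᶠ[atTop]
      fun n => ∑ i ∈ range n, f i := by
    filter_upwards [eventually_ge_atTop m] with n hn
    exact sum_range_add_sum_Ico f hn
  rw [← tendsto_congr' hsplit]
  refine ⟨fun h => ?_, tendsto_atTop_add_const_left _ _⟩
  simpa using tendsto_atTop_add_const_left _ (-∑ i ∈ range m, f i) h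

lemma ProbabilityTheory.iIndepFun.neg {Ω : Type*} [MeasurableSpace Ω] {P : Measure Ω}
    {X : ℕ → Ω → ℤ} (hindep : iIndepFun X P) : iIndepFun (fun n ω => -X n ω) P :=
  hindep.comp (fun _ => Neg.neg) fun _ => measurable_neg

lemma measurableSet_limsup_comap_setOf_tendsto_sum_atTop {Ω : Type*} {X : ℕ → Ω → ℤ} :
    MeasurableSet[limsup (fun n => MeasurableSpace.comap (X n) inferInstance) atTop]
      {ω | Tendsto (fun n => ∑ i ∈ range n, X i ω) atTop atTop} := by
  rw [limsup_eq_iInf_iSup_of_nat, MeasurableSpace.measurableSet_iInf]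
  intro m
  simp_rw [tendsto_sum_range_atTop_iff_sum_Ico _ m]
  refine measurableSet_tendsto _ fun n => Finset.measurable_sum _ fun i hi => ?_
  exact Measurable.of_comap_le (le_iSup₂ (f := fun i (_ : i ≥ m) =>
    MeasurableSpace.comap (X i) inferInstance) i (mem_Ico.1 hi).1)

section Probability

variable {Ω : Type*} [MeasurableSpace Ω] (P : Measure Ω)

lemma ae_eq_one_or_eq_neg_one [IsProbabilityMeasure P] {Y : Ω → ℤ} (hY : Measurable Y)
    (h1 : P {ω | Y ω = 1} = 1 / 2) (h2 : P {ω | Y ω = -1} = 1 / 2) :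
    ∀ᵐ ω ∂P, Y ω = 1 ∨ Y ω = -1 := by
  have hmeas : MeasurableSet {ω | Y ω = -1} := hY (measurableSet_singleton _)
  have hdisj : Disjoint {ω | Y ω = 1} {ω | Y ω = -1} :=
    Set.disjoint_left.2 fun ω (h : Y ω = 1) (h' : Y ω = -1) => by omega
  have hunion : MeasurableSet {ω | Y ω = 1 ∨ Y ω = -1} :=
    (hY (measurableSet_singleton 1)).union hmeas
  rw [ae_iff_measure_eq hunion.nullMeasurableSet, Set.ofPred_or, measure_union hdisj hmeas, h1,
    h2, measure_univ, ENNReal.add_halves]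

lemma map_neg_eq_map [IsProbabilityMeasure P] {Y : Ω → ℤ} (hY : Measurable Y)
    (h1 : P {ω | Y ω = 1} = 1 / 2) (h2 : P {ω | Y ω = -1} = 1 / 2) :
    P.map (fun ω => -Y ω) = P.map Y := by
  refine Measure.ext_of_singleton fun a => ?_
  rw [Measure.map_apply (f := fun ω => -Y ω) hY.neg (measurableSet_singleton a),
    Measure.map_apply hY (measurableSet_singleton a)]
  change P {ω | -Y ω = a} = P {ω | Y ω = a}
  simp_rw [neg_eq_iff_eq_neg]
  have hnull : ∀ b : ℤ, b ≠ 1 → b ≠ -1 → P {ω | Y ω = b} = 0 := fun b hb1 hb2 =>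
    measure_eq_zero_iff_ae_notMem.2 <| (ae_eq_one_or_eq_neg_one P hY h1 h2).mono
      fun ω hω (h : Y ω = b) => by omega
  by_cases ha1 : a = 1
  · subst ha1; rw [h1, h2]
  by_cases ha2 : a = -1
  · subst ha2; rw [neg_neg, h1, h2]
  rw [hnull a ha1 ha2, hnull (-a) (by omega) (by omega)]

variable {X : ℕ → Ω → ℤ}

lemma map_neg_path_eq_map_path (hmeas : ∀ n, Measurable (X n)) (hindep : iIndepFun X P)
    (hsymm : ∀ n, P.map (fun ω => -X n ω) = P.map (X n)) :
    P.map (fun ω n => -X n ω) = P.map (fun ω n => X n ω) := by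
  calc P.map (fun ω n => -X n ω) = Measure.infinitePi fun n => P.map fun ω => -X n ω :=
        hindep.neg.map_fun_eq_infinitePi_map fun n => (hmeas n).neg
    _ = Measure.infinitePi fun n => P.map (X n) := by simp only [hsymm]
    _ = P.map (fun ω n => X n ω) := (hindep.map_fun_eq_infinitePi_map hmeas).symm

theorem measure_setOf_tendsto_sum_atTop_eq_zero [IsProbabilityMeasure P]
    (hmeas : ∀ n, Measurable (X n)) (hindep : iIndepFun X P)
    (hsymm : ∀ n, P.map (fun ω => -X n ω) = P.map (X n)) :
    P {ω | Tendsto (fun n => ∑ i ∈ range n, X i ω) atTop atTop} = 0 := by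
  set T : Set (ℕ → ℤ) := {x | Tendsto (fun n => ∑ i ∈ range n, x i) atTop atTop}
  have hT : MeasurableSet T :=
    measurableSet_tendsto _ fun n => Finset.measurable_sum _ fun i _ => measurable_pi_apply i
  have hpath : Measurable (fun ω n => X n ω) := measurable_pi_lambda _ hmeas
  have hnegpath : Measurable (fun ω n => -X n ω) := measurable_pi_lambda _ fun n => (hmeas n).neg
  set A : Set Ω := (fun ω n => X n ω) ⁻¹' T
  set B : Set Ω := (fun ω n => -X n ω) ⁻¹' T
  change P A = 0
  have hsame : P B = P A := by
    rw [← Measure.map_apply hnegpath hT, ← Measure.map_apply hpath hT,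
      map_neg_path_eq_map_path P hmeas hindep hsymm]
  have hdisj : Disjoint A B := by
    refine Set.disjoint_left.2 fun ω hup hdown => ?_
    simp only [A, B, T, Set.mem_preimage, Set.mem_ofPred_eq, sum_neg_distrib] at hup hdown
    obtain ⟨n, h1, h2⟩ :=
      ((hup.eventually_gt_atTop 0).and (hdown.eventually_gt_atTop 0)).exists
    omega
  have h01 : P A = 0 ∨ P A = 1 :=
    measure_zero_or_one_of_measurableSet_limsup_atTop (fun n => (hmeas n).comap_le)
      ((iIndepFun_iff_iIndep _ _ _).1 hindep) measurableSet_limsup_comap_setOf_tendsto_sum_atTop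
  refine h01.resolve_right fun h1 => ?_
  have := prob_le_one (μ := P) (s := A ∪ B)
  rw [measure_union hdisj (hnegpath hT), hsame, h1] at this
  norm_num at this

end Probability

/-- Almost surely there are infinitely many times `n` at which the favourite
site of a simple symmetric random walk is unique. -/
theorem unique_favourite_infinitely_often
    {Ω : Type*} [MeasurableSpace Ω] (P : Measure Ω) [IsProbabilityMeasure P]
    (X : ℕ → Ω → ℤ) (hmeas : ∀ n, Measurable (X n))
    (hindep : iIndepFun X P)
    (hdist : ∀ n, P {ω | X n ω = 1} = 1/2 ∧ P {ω | X n ω = -1} = 1/2)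
    (S : ℕ → Ω → ℤ) (hS : ∀ n ω, S n ω = ∑ i ∈ Finset.range n, X i ω) :
    ∀ᵐ ω ∂P, {n : ℕ | (favSites (fun k => S k ω) n).ncard = 1}.Infinite := by
  have hsymm : ∀ n, P.map (fun ω => -X n ω) = P.map (X n) :=
    fun n => map_neg_eq_map P (hmeas n) (hdist n).1 (hdist n).2
  have hstep : ∀ᵐ ω ∂P, ∀ n, |X n ω| ≤ 1 := ae_all_iff.2 fun n =>
    (ae_eq_one_or_eq_neg_one P (hmeas n) (hdist n).1 (hdist n).2).mono fun ω h => by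
      rcases h with h | h <;> simp [h]
  have hup := measure_setOf_tendsto_sum_atTop_eq_zero P hmeas hindep hsymm
  have hdown := measure_setOf_tendsto_sum_atTop_eq_zero P (X := fun n ω => -X n ω)
    (fun n => (hmeas n).neg) hindep.neg fun n => by simpa only [neg_neg] using (hsymm n).symm
  rw [measure_eq_zero_iff_ae_notMem] at hup hdown
  filter_upwards [hstep, hup, hdown] with ω hω hup hdown
  rw [show (fun k => S k ω) = fun n => ∑ i ∈ range n, X i ω from funext (hS · ω)]
  refine infinite_setOf_ncard_favSites_eq_one ?_
  by_contra! hrec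
  rcases tendsto_atTop_or_atBot_of_finite_fibres (f := fun n => ∑ i ∈ range n, X i ω)
    (by simpa [sum_range_succ] using hω) hrec with h | h
  · exact hup h
  · exact hdown (by simpa only [sum_neg_distrib] using tendsto_neg_atTop_iff.2 h)
end
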